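/- arXiv:2303.10123 — 3 statements merged into one kernel-verified Lean document; each statement's English description precedes it below -/
import Mathlib

section
/- For every real δ and every real X ≥ 2, one has ∑_{p ≤ X, p prime} cos(δ · log p)/p = log|ζ(1 + 1/log X + iδ)| + O(1), where the implied constant is absolute. -/
/-!
With `σ = 1 + 1 / log X` and `s = σ + iδ`, the Euler product gives
`log |ζ(s)| = ∑_p Re(-log (1 - p^{-s}))`, and `Re(-log (1 - z)) = Re z + O(|z|²)`, so up to
`∑_p p^{-2}` this is `∑_p p^{-σ} cos (δ log p)`. For `p ≤ X`, replacing `p^{-σ}` by `p^{-1}` costs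
at most `(σ - 1) ∑_{p ≤ X} log p / p = O(1)` by Chebyshev's bound. For `p > X`, group the primes
into the ranges `X^{2^k} < p ≤ X^{2^{k+1}}`: on each range `∑ 1/p = O(1)` while
`p^{-(σ - 1)} ≤ e^{-2^k}`, so the tail is `O(1)` as well.
-/

open Finset Real

theorem sum_primesLE_log_div_le (n : ℕ) :
    ∑ p ∈ Nat.primesLE n, log p / p ≤ 4 * log n := by
  induction n using Nat.strong_induction_on with
  | _ n ih =>
  rcases lt_or_ge n 2 with hn | hn
  · interval_cases n <;> simp
  have hm : 1 ≤ n / 2 := by omega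
  have hn0 : (0 : ℝ) < n := by exact_mod_cast (by omega : 0 < n)
  have hlow : ∑ p ∈ Nat.primesLE n with p ≤ n / 2, log p / p ≤ 4 * log (n / 2 : ℕ) := by
    refine le_of_eq_of_le ?_ (ih (n / 2) (by omega))
    congr 1
    ext p
    simp only [mem_filter, Nat.mem_primesLE]
    exact ⟨fun h => ⟨h.2, h.1.2⟩, fun h => ⟨⟨by omega, h.2⟩, h.1⟩⟩
  have hhigh : ∑ p ∈ Nat.primesLE n with ¬p ≤ n / 2, log p / p ≤ 2 * log 4 :=
    calc ∑ p ∈ Nat.primesLE n with ¬p ≤ n / 2, log p / p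
        ≤ ∑ p ∈ Nat.primesLE n with ¬p ≤ n / 2, log p * (2 / n) := by
          refine sum_le_sum fun p hp => ?_
          simp only [mem_filter, Nat.mem_primesLE] at hp
          have hpn : (n : ℝ) < 2 * p := by exact_mod_cast (by omega : n < 2 * p)
          have hp0 : (0 : ℝ) < p := by exact_mod_cast hp.1.2.pos
          rw [div_eq_mul_inv]
          gcongr
          rw [le_div_iff₀ (by linarith), inv_mul_eq_div, div_le_iff₀ hp0]
          linarith
      _ ≤ (∑ p ∈ Nat.primesLE n, log p) * (2 / n) := by
          rw [← sum_mul]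
          gcongr
          exact filter_subset _ _
      _ ≤ (log 4 * n) * (2 / n) := by
          rw [← Chebyshev.theta_eq_sum_primesLE_log]
          gcongr
          exact Chebyshev.theta_le_log4_mul_x n.cast_nonneg
      _ = 2 * log 4 := by field_simp
  have hhalf : log (n / 2 : ℕ) + log 2 ≤ log n := by
    rw [← log_mul (by positivity) (by norm_num)]
    exact log_le_log (by positivity) (by exact_mod_cast Nat.div_mul_le_self n 2)
  have hlog4 : log 4 = 2 * log 2 := by
    rw [show (4 : ℝ) = 2 ^ 2 by norm_num, log_pow, Nat.cast_ofNat]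
  rw [← sum_filter_add_sum_filter_not _ (· ≤ n / 2)]
  linarith

theorem sum_primesLE_floor_log_div_le {x : ℝ} (hx : 1 ≤ x) :
    ∑ p ∈ Nat.primesLE ⌊x⌋₊, log p / p ≤ 4 * log x := by
  refine (sum_primesLE_log_div_le _).trans ?_
  gcongr
  · exact_mod_cast Nat.floor_pos.mpr hx
  · exact Nat.floor_le (by linarith)

theorem sum_inv_le_eight_of_mem_Ioc_sq {Y : ℝ} (hY : 2 ≤ Y) {t : Finset ℕ}
    (ht : ∀ p ∈ t, p.Prime ∧ Y < p ∧ (p : ℝ) ≤ Y ^ 2) : ∑ p ∈ t, (p : ℝ)⁻¹ ≤ 8 := by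
  have hlogY : 0 < log Y := log_pos (by linarith)
  have hsub : t ⊆ Nat.primesLE ⌊Y ^ 2⌋₊ := fun p hp =>
    Nat.mem_primesLE.mpr ⟨Nat.le_floor (ht p hp).2.2, (ht p hp).1⟩
  calc ∑ p ∈ t, (p : ℝ)⁻¹ ≤ ∑ p ∈ t, log p / p / log Y := by
        refine sum_le_sum fun p hp => ?_
        have hp0 : 0 < (p : ℝ) := by linarith [(ht p hp).2.1]
        rw [div_div, le_div_iff₀ (by positivity), inv_mul_cancel_left₀ hp0.ne']
        exact log_le_log (by linarith) (ht p hp).2.1.le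
    _ ≤ (∑ p ∈ Nat.primesLE ⌊Y ^ 2⌋₊, log p / p) / log Y := by
        rw [← sum_div]
        gcongr
    _ ≤ 4 * log (Y ^ 2) / log Y := by
        gcongr
        exact sum_primesLE_floor_log_div_le (by nlinarith)
    _ = 8 := by
        rw [log_pow, Nat.cast_ofNat]
        field_simp
        norm_num

theorem exp_neg_two_pow_le (K : ℕ) : exp (-2 ^ K) ≤ 2⁻¹ ^ (K + 1) :=
  calc exp (-2 ^ K) ≤ exp (-(K + 1 : ℕ)) := by
        gcongr
        exact_mod_cast Nat.lt_two_pow_self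
    _ = (exp 1)⁻¹ ^ (K + 1) := by rw [← exp_neg, ← exp_nat_mul]; ring_nf
    _ ≤ 2⁻¹ ^ (K + 1) := by
        gcongr
        linarith [add_one_le_exp 1]

theorem rpow_neg_one_add_inv_log_le {X p : ℝ} (hX : 1 < X) (K : ℕ) (hp : X ^ 2 ^ K < p) :
    p ^ (-(1 + 1 / log X)) ≤ 2⁻¹ ^ (K + 1) * p⁻¹ := by
  have hlogX : 0 < log X := log_pos hX
  have hp0 : 0 < p := lt_trans (by positivity) hp
  rw [rpow_def_of_pos hp0, show log p * -(1 + 1 / log X) = -log p + -(log p / log X) by ring,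
    exp_add, exp_neg (log p), exp_log hp0, mul_comm]
  gcongr
  refine le_trans (exp_le_exp.mpr ?_) (exp_neg_two_pow_le K)
  rw [neg_le_neg_iff, le_div_iff₀ hlogX]
  have := log_lt_log (by positivity) hp
  rw [log_pow] at this
  push_cast at this
  exact this.le

theorem sum_rpow_neg_le_of_le_pow_two_pow {X : ℝ} (hX : 2 ≤ X) (K : ℕ) {t : Finset ℕ}
    (ht : ∀ p ∈ t, p.Prime ∧ X < p ∧ (p : ℝ) ≤ X ^ 2 ^ K) :
    ∑ p ∈ t, (p : ℝ) ^ (-(1 + 1 / log X)) ≤ 8 * (1 - 2⁻¹ ^ K) := by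
  induction K generalizing t with
  | zero =>
    have : t = ∅ := eq_empty_of_forall_notMem fun p hp => by
      have := ht p hp
      simp only [pow_zero, pow_one] at this
      linarith
    simp [this]
  | succ K ih =>
    have hlow := ih (t := {p ∈ t | (p : ℝ) ≤ X ^ 2 ^ K}) fun p hp => by
      rw [mem_filter] at hp
      exact ⟨(ht p hp.1).1, (ht p hp.1).2.1, hp.2⟩
    have hhigh : ∑ p ∈ t with ¬((p : ℕ) : ℝ) ≤ X ^ 2 ^ K, (p : ℝ) ^ (-(1 + 1 / log X))
        ≤ 2⁻¹ ^ (K + 1) * 8 :=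
      calc _ ≤ ∑ p ∈ t with ¬((p : ℕ) : ℝ) ≤ X ^ 2 ^ K, 2⁻¹ ^ (K + 1) * (p : ℝ)⁻¹ := by
            refine sum_le_sum fun p hp => ?_
            rw [mem_filter, not_le] at hp
            exact rpow_neg_one_add_inv_log_le (by linarith) K hp.2
        _ ≤ 2⁻¹ ^ (K + 1) * 8 := by
            have hY : 2 ≤ X ^ 2 ^ K := hX.trans (le_self_pow₀ (by linarith) (by positivity))
            rw [← mul_sum]
            gcongr
            refine sum_inv_le_eight_of_mem_Ioc_sq hY fun p hp => ?_
            rw [mem_filter, not_le] at hp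
            refine ⟨(ht p hp.1).1, hp.2, ?_⟩
            rw [← pow_mul, ← pow_succ]
            exact (ht p hp.1).2.2
    rw [← sum_filter_add_sum_filter_not t (fun p => (p : ℝ) ≤ X ^ 2 ^ K), pow_succ]
    rw [pow_succ] at hhigh
    linarith

theorem sum_rpow_neg_le_eight_of_lt {X : ℝ} (hX : 2 ≤ X) {t : Finset ℕ}
    (ht : ∀ p ∈ t, p.Prime ∧ X < p) :
    ∑ p ∈ t, (p : ℝ) ^ (-(1 + 1 / log X)) ≤ 8 := by
  set K := t.sup id
  have hK : (K : ℝ) ≤ X ^ 2 ^ K :=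
    calc (K : ℝ) ≤ 2 ^ K := by exact_mod_cast Nat.lt_two_pow_self.le
      _ ≤ 2 ^ 2 ^ K := pow_le_pow_right₀ (by norm_num) Nat.lt_two_pow_self.le
      _ ≤ X ^ 2 ^ K := by gcongr
  have := sum_rpow_neg_le_of_le_pow_two_pow hX K fun p hp =>
    ⟨(ht p hp).1, (ht p hp).2, le_trans (by exact_mod_cast le_sup (f := id) hp) hK⟩
  linarith [pow_nonneg (by norm_num : (0 : ℝ) ≤ 2⁻¹) K]

theorem abs_inv_sub_rpow_neg_le {x ε : ℝ} (hx : 1 ≤ x) (hε : 0 ≤ ε) :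
    |x⁻¹ - x ^ (-(1 + ε))| ≤ ε * (log x / x) := by
  have hx0 : 0 < x := by linarith
  have hu : 0 ≤ ε * log x := mul_nonneg hε (log_nonneg hx)
  rw [rpow_def_of_pos hx0, show log x * -(1 + ε) = -log x + -(ε * log x) by ring,
    exp_add, exp_neg (log x), exp_log hx0, ← mul_one_sub,
    abs_of_nonneg (mul_nonneg (by positivity) (by simpa using hu)), mul_div_assoc', div_eq_inv_mul]
  gcongr
  linarith [add_one_le_exp (-(ε * log x))]

theorem norm_tsum_sub_sum_le_of_sum_le {ι E : Type*} [NormedAddCommGroup E] [CompleteSpace E]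
    {f : ι → E} {g : ι → ℝ} {s : Finset ι} {C : ℝ} (hfg : ∀ i ∉ s, ‖f i‖ ≤ g i)
    (hC : ∀ t : Finset ι, (∀ i ∈ t, i ∉ s) → ∑ i ∈ t, g i ≤ C) :
    ‖∑' i, f i - ∑ i ∈ s, f i‖ ≤ C := by
  let g' : ((s : Set ι)ᶜ : Set ι) → ℝ := fun i => g i
  have hg'C : ∀ t, ∑ i ∈ t, g' i ≤ C := fun t => by
    have := hC (t.map (Function.Embedding.subtype _)) fun i hi => by
      obtain ⟨j, -, rfl⟩ := mem_map.mp hi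
      exact j.2
    rwa [sum_map] at this
  have hfg' : ∀ i : ((s : Set ι)ᶜ : Set ι), ‖f i‖ ≤ g' i := fun i => hfg i i.2
  have hg' : Summable g' := summable_of_sum_le (fun i => (norm_nonneg _).trans (hfg' i)) hg'C
  have hf : Summable f := (s.summable_compl_iff).mp (hg'.of_norm_bounded hfg')
  rw [← hf.sum_add_tsum_compl, add_sub_cancel_left]
  exact (tsum_of_norm_bounded hg'.hasSum hfg').trans (hg'.tsum_le_of_sum_le hg'C)

theorem re_ofReal_cpow {x : ℝ} (hx : 0 < x) (s : ℂ) :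
    ((x : ℂ) ^ s).re = x ^ s.re * cos (s.im * log x) := by
  rw [Complex.cpow_def_of_ne_zero (by exact_mod_cast hx.ne'), ← Complex.ofReal_log hx.le,
    Complex.exp_re, Complex.re_ofReal_mul, Complex.im_ofReal_mul, rpow_def_of_pos hx, mul_comm s.im]

theorem norm_neg_log_one_sub_sub_self_le {z : ℂ} (hz : ‖z‖ ≤ 1 / 2) :
    ‖-Complex.log (1 - z) - z‖ ≤ ‖z‖ ^ 2 := by
  have h := Complex.norm_log_one_add_sub_self_le (z := -z) (by rw [norm_neg]; linarith)
  rw [show -Complex.log (1 - z) - z = -(Complex.log (1 + -z) - -z) by rw [← sub_eq_add_neg]; ring,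
    norm_neg]
  refine (norm_neg z ▸ h).trans ?_
  have : (1 - ‖z‖)⁻¹ ≤ 2 := by rw [inv_le_comm₀ (by linarith) two_pos]; linarith
  nlinarith [sq_nonneg ‖z‖]

theorem abs_log_norm_riemannZeta_sub_tsum_re_le {s : ℂ} (hs : 1 < s.re) :
    |log ‖riemannZeta s‖ - ∑' p : Nat.Primes, ((p : ℂ) ^ (-s)).re| ≤ 2 := by
  set z : Nat.Primes → ℂ := fun p => (p : ℂ) ^ (-s)
  have hz_norm : ∀ p : Nat.Primes, ‖z p‖ ≤ (p : ℝ)⁻¹ := fun p => by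
    rw [Complex.norm_natCast_cpow_of_pos p.prop.pos, Complex.neg_re, ← rpow_neg_one]
    exact rpow_le_rpow_of_exponent_le (by exact_mod_cast p.prop.one_lt.le) (by linarith)
  have hz_half : ∀ p : Nat.Primes, ‖z p‖ ≤ 1 / 2 := fun p => (hz_norm p).trans <| by
    rw [one_div]
    exact inv_anti₀ two_pos (by exact_mod_cast p.prop.two_le)
  have hz : Summable z := (Nat.Primes.summable_rpow.mpr (by linarith : -s.re < -1)).of_norm_bounded
    fun p => (Complex.norm_natCast_cpow_of_pos p.prop.pos _).le
  have hsq : Summable fun p : Nat.Primes => 1 / (p : ℝ) ^ 2 :=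
    hasSum_zeta_two.summable.comp_injective Nat.Primes.coe_nat_injective
  rw [← riemannZeta_eulerProduct_exp_log hs, Complex.norm_exp, Real.log_exp,
    ← Complex.re_tsum hz, ← Complex.sub_re,
    ← hz.clog_one_sub.neg.tsum_sub hz]
  calc _ ≤ ‖∑' p, (-Complex.log (1 - z p) - z p)‖ := Complex.abs_re_le_norm _
    _ ≤ ∑' p : Nat.Primes, 1 / (p : ℝ) ^ 2 := tsum_of_norm_bounded hsq.hasSum fun p =>
        (norm_neg_log_one_sub_sub_self_le (hz_half p)).trans <| by
          rw [one_div, ← inv_pow]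
          exact pow_le_pow_left₀ (norm_nonneg _) (hz_norm p) 2
    _ ≤ ∑' n : ℕ, 1 / (n : ℝ) ^ 2 :=
        tsum_comp_le_tsum_of_inj hasSum_zeta_two.summable (fun n => by positivity)
          Nat.Primes.coe_nat_injective
    _ = π ^ 2 / 6 := hasSum_zeta_two.tsum_eq
    _ ≤ 2 := by nlinarith [pi_lt_d2, pi_pos]

theorem abs_tsum_primes_sub_sum_primesLE_le {X : ℝ} (hX : 2 ≤ X) {f : ℕ → ℝ}
    (hf : ∀ p, p.Prime → |f p| ≤ (p : ℝ) ^ (-(1 + 1 / log X))) :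
    |∑' p : Nat.Primes, f p - ∑ p ∈ Nat.primesLE ⌊X⌋₊, f p| ≤ 8 := by
  rw [← sum_subtype_of_mem f fun p hp => Nat.prime_of_mem_primesLE hp, ← Real.norm_eq_abs]
  refine norm_tsum_sub_sum_le_of_sum_le (g := fun p : Nat.Primes => (p : ℝ) ^ (-(1 + 1 / log X)))
    (fun p _ => hf p p.prop) fun t ht => ?_
  have := sum_rpow_neg_le_eight_of_lt hX (t := t.map ⟨(↑), Nat.Primes.coe_nat_injective⟩)
    fun p hp => by
      obtain ⟨q, hq, rfl⟩ := mem_map.mp hp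
      refine ⟨q.prop, lt_of_not_ge fun hqX => ht q hq ?_⟩
      exact mem_subtype.mpr (Nat.mem_primesLE.mpr ⟨Nat.le_floor hqX, q.prop⟩)
  rwa [sum_map] at this

theorem abs_sum_div_sub_sum_mul_rpow_le {X : ℝ} (hX : 2 ≤ X) {c : ℕ → ℝ} (hc : ∀ p, |c p| ≤ 1) :
    |∑ p ∈ Nat.primesLE ⌊X⌋₊, c p / p
      - ∑ p ∈ Nat.primesLE ⌊X⌋₊, c p * (p : ℝ) ^ (-(1 + 1 / log X))| ≤ 4 := by
  have hlogX : 0 < log X := log_pos (by linarith)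
  rw [← sum_sub_distrib]
  calc _ ≤ ∑ p ∈ Nat.primesLE ⌊X⌋₊, 1 / log X * (log p / p) := by
        refine (abs_sum_le_sum_abs _ _).trans (sum_le_sum fun p hp => ?_)
        have hp := (Nat.prime_of_mem_primesLE hp).one_lt
        rw [div_eq_mul_inv, ← mul_sub, abs_mul]
        exact (mul_le_of_le_one_left (abs_nonneg _) (hc p)).trans
          (abs_inv_sub_rpow_neg_le (by exact_mod_cast hp.le) (by positivity))
    _ = 1 / log X * ∑ p ∈ Nat.primesLE ⌊X⌋₊, log p / p := (mul_sum ..).symm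
    _ ≤ 1 / log X * (4 * log X) := by
        gcongr
        exact sum_primesLE_floor_log_div_le (by linarith)
    _ = 4 := by field_simp

theorem abs_tsum_re_cpow_sub_sum_cos_div_le {X : ℝ} (hX : 2 ≤ X) (δ : ℝ) :
    |∑' p : Nat.Primes, ((p : ℂ) ^ (-(1 + 1 / log X + Complex.I * δ))).re
      - ∑ p ∈ Nat.primesLE ⌊X⌋₊, cos (δ * log p) / p| ≤ 12 := by
  set f : ℕ → ℝ := fun p => ((p : ℂ) ^ (-(1 + 1 / log X + Complex.I * δ))).re
  have hf : ∀ p : ℕ, 0 < p → f p = cos (δ * log p) * (p : ℝ) ^ (-(1 + 1 / log X)) :=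
    fun p hp => by
      simp only [f]
      rw [← Complex.ofReal_natCast, re_ofReal_cpow (by exact_mod_cast hp)]
      simp [cos_neg, mul_comm]
  have htail := abs_tsum_primes_sub_sum_primesLE_le hX (f := f) fun p hp => by
    rw [hf p hp.pos, abs_mul, abs_of_nonneg (rpow_nonneg p.cast_nonneg _)]
    exact mul_le_of_le_one_left (by positivity) (abs_cos_le_one _)
  have hhead := abs_sum_div_sub_sum_mul_rpow_le hX (c := fun p => cos (δ * log p))
    fun _ => abs_cos_le_one _
  rw [sum_congr rfl fun p hp => hf p (Nat.prime_of_mem_primesLE hp).pos] at htail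
  rw [abs_le] at *
  constructor <;> linarith

/-- `∑_{p ≤ X} cos(δ log p)/p = log|ζ(1 + 1/log X + iδ)| + O(1)` with an absolute constant. -/
theorem stmt2 : ∃ C > 0, ∀ (δ X : ℝ), 2 ≤ X →
    |(∑ p ∈ (Finset.range (⌊X⌋₊ + 1)).filter Nat.Prime,
        Real.cos (δ * Real.log p) / p)
      - Real.log ‖riemannZeta (1 + 1 / Real.log X + Complex.I * δ)‖| ≤ C := by
  refine ⟨14, by norm_num, fun δ X hX => ?_⟩
  have hs : 1 < (1 + 1 / Real.log X + Complex.I * δ).re := by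
    simpa using log_pos (by linarith : (1 : ℝ) < X)
  have hzeta := abs_log_norm_riemannZeta_sub_tsum_re_le hs
  have hprimes := abs_tsum_re_cpow_sub_sum_cos_div_le hX δ
  rw [← Nat.primesLE_eq_filter_range, abs_le] at *
  constructor <;> linarith
end

section
/- Let k, N be natural numbers with N^k ≤ T / log T, T ≥ 3, and let a : primes → ℂ. Then ∫_T^{2T} |∑_{p ≤ N} a_p p^{-it}|^{2k} dt ≪ T · k! · (∑_{p ≤ N} |a_p|^2)^k, with an absolute implied constant. -/
/-!
Write `z(t) = ∑_{p ≤ N} a_p p^{-it}`. Expanding `z(t)^k` over `k`-tuples of primes gives a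
Dirichlet polynomial `∑_{n ≤ N^k} c_n n^{-it}`; a product of primes determines its factors up
to order, so each `n` comes from at most `k!` tuples and Cauchy–Schwarz gives
`∑ |c_n|² ≤ k! (∑ |a_p|²)^k`.

For the mean value theorem `∫_T^{2T} |∑_{n ≤ M} c_n n^{-it}|² ≤ (T + 4 M H_M) ∑ |c_n|²`,
integrate the cross terms: the diagonal gives `T`, and since `|log m - log n| ≥ |m - n| / M`
an off-diagonal term is at most `2M / |m - n|`. Schur's test bounds this kernel by its row
sums, at most `T + 4 M H_M`. Finally `M = N^k ≤ T / log T` makes `M H_M ≤ 2T`.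
-/

open Finset ComplexConjugate

theorem sum_sum_mul_mul_le_of_sum_le {ι : Type*} (s : Finset ι) (x : ι → ℝ) {W : ι → ι → ℝ}
    (hW : ∀ i ∈ s, ∀ j ∈ s, 0 ≤ W i j) (hsymm : ∀ i ∈ s, ∀ j ∈ s, W i j = W j i) {B : ℝ}
    (hB : ∀ i ∈ s, ∑ j ∈ s, W i j ≤ B) :
    ∑ i ∈ s, ∑ j ∈ s, x i * x j * W i j ≤ B * ∑ i ∈ s, x i ^ 2 := by
  have hswap : ∑ i ∈ s, ∑ j ∈ s, x j ^ 2 * W i j = ∑ i ∈ s, ∑ j ∈ s, x i ^ 2 * W i j := by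
    rw [sum_comm]
    exact sum_congr rfl fun i hi => sum_congr rfl fun j hj => by rw [hsymm j hj i hi]
  calc ∑ i ∈ s, ∑ j ∈ s, x i * x j * W i j
      ≤ ∑ i ∈ s, ∑ j ∈ s, (x i ^ 2 * W i j + x j ^ 2 * W i j) / 2 := by
        gcongr with i hi j hj
        nlinarith [sq_nonneg (x i - x j), hW i hi j hj]
    _ = ∑ i ∈ s, x i ^ 2 * ∑ j ∈ s, W i j := by
        simp only [← sum_div, sum_add_distrib, hswap, mul_sum]
        ring
    _ ≤ ∑ i ∈ s, x i ^ 2 * B := by gcongr with i hi; exact hB i hi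
    _ = B * ∑ i ∈ s, x i ^ 2 := by rw [mul_sum]; simp only [mul_comm]

theorem sum_inv_le_harmonic {s : Finset ℕ} {e : ℕ → ℕ} {M : ℕ} (he : Set.InjOn e s)
    (hs : ∀ n ∈ s, e n ∈ Icc 1 M) : ∑ n ∈ s, ((e n : ℝ))⁻¹ ≤ harmonic M := by
  rw [← sum_image (f := fun d : ℕ => (d : ℝ)⁻¹) he, harmonic_eq_sum_Icc]
  push_cast
  exact sum_le_sum_of_subset_of_nonneg (image_subset_iff.mpr hs) fun _ _ _ => by positivity

theorem sum_erase_inv_abs_sub_le {m M : ℕ} (hm : m ≤ M) :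
    ∑ n ∈ (Icc 1 M).erase m, |(m : ℝ) - n|⁻¹ ≤ 2 * harmonic M := by
  rw [← sum_filter_add_sum_filter_not _ (· < m), two_mul]
  gcongr
  · calc _ = ∑ n ∈ ((Icc 1 M).erase m).filter (· < m), (((m - n : ℕ) : ℝ))⁻¹ := by
          refine sum_congr rfl fun n hn => ?_
          rw [mem_filter] at hn
          rw [Nat.cast_sub hn.2.le, abs_of_pos (by simpa using hn.2)]
      _ ≤ harmonic M := sum_inv_le_harmonic
          (fun x hx y hy h => by
            rw [mem_coe, mem_filter, mem_erase, mem_Icc] at hx hy; change m - x = m - y at h; omega)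
          (fun n hn => by simp only [mem_filter, mem_erase, mem_Icc] at hn ⊢; omega)
  · calc _ = ∑ n ∈ ((Icc 1 M).erase m).filter (¬ · < m), (((n - m : ℕ) : ℝ))⁻¹ := by
          refine sum_congr rfl fun n hn => ?_
          simp only [mem_filter, mem_erase, not_lt] at hn
          rw [Nat.cast_sub hn.2, abs_sub_comm,
            abs_of_pos (by simpa using lt_of_le_of_ne hn.2 hn.1.1.symm)]
      _ ≤ harmonic M := sum_inv_le_harmonic
          (fun x hx y hy h => by
            rw [mem_coe, mem_filter, mem_erase, mem_Icc] at hx hy; change x - m = y - m at h; omega)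
          (fun n hn => by simp only [mem_filter, mem_erase, mem_Icc] at hn ⊢; omega)

theorem abs_sub_div_le_abs_log_sub {x y M : ℝ} (hx : 0 < x) (hy : 0 < y) (hxM : x ≤ M)
    (hyM : y ≤ M) : |x - y| / M ≤ |Real.log x - Real.log y| := by
  wlog hxy : x ≤ y generalizing x y
  · rw [abs_sub_comm, abs_sub_comm (Real.log x)]
    exact this hy hx hyM hxM (le_of_not_ge hxy)
  have hlog : 1 - x / y ≤ Real.log y - Real.log x := by
    rw [← Real.log_div hy.ne' hx.ne']
    simpa using Real.one_sub_inv_le_log_of_pos (div_pos hy hx)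
  rw [abs_sub_comm, abs_of_nonneg (by linarith), abs_sub_comm,
    abs_of_nonneg (by linarith [Real.log_le_log hx hxy])]
  calc (y - x) / M ≤ (y - x) / y := div_le_div_of_nonneg_left (by linarith) hy hyM
    _ = 1 - x / y := by field_simp
    _ ≤ _ := hlog

theorem norm_integral_exp_ofReal_mul_I_le {θ : ℝ} (hθ : θ ≠ 0) (a b : ℝ) :
    ‖∫ t in a..b, Complex.exp ((θ * t : ℝ) * Complex.I)‖ ≤ 2 / |θ| := by
  have hc : (θ : ℂ) * Complex.I ≠ 0 := mul_ne_zero (by exact_mod_cast hθ) Complex.I_ne_zero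
  have hint : ∫ t in a..b, Complex.exp ((θ * t : ℝ) * Complex.I)
      = (Complex.exp ((θ * b : ℝ) * Complex.I) - Complex.exp ((θ * a : ℝ) * Complex.I))
        / (θ * Complex.I) := by
    simp only [Complex.ofReal_mul, mul_right_comm _ _ Complex.I]
    exact integral_exp_mul_complex hc
  rw [hint, norm_div, Complex.norm_mul, Complex.norm_I, mul_one, Complex.norm_real,
    Real.norm_eq_abs]
  gcongr
  calc _ ≤ ‖Complex.exp ((θ * b : ℝ) * Complex.I)‖ + ‖Complex.exp ((θ * a : ℝ) * Complex.I)‖ :=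
        norm_sub_le _ _
    _ = 2 := by rw [Complex.norm_exp_ofReal_mul_I, Complex.norm_exp_ofReal_mul_I]; norm_num

theorem natCast_cpow_mul_conj_natCast_cpow {m n : ℕ} (hm : m ≠ 0) (hn : n ≠ 0) (t : ℝ) :
    (m : ℂ) ^ (-(Complex.I * t)) * conj ((n : ℂ) ^ (-(Complex.I * t)))
      = Complex.exp (((Real.log n - Real.log m) * t : ℝ) * Complex.I) := by
  rw [Complex.cpow_def_of_ne_zero (by exact_mod_cast hm),
    Complex.cpow_def_of_ne_zero (by exact_mod_cast hn), ← Complex.exp_conj, ← Complex.exp_add,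
    ← Complex.natCast_log, ← Complex.natCast_log]
  congr 1
  simp only [map_mul, map_neg, Complex.conj_ofReal, Complex.conj_I]
  push_cast
  ring

theorem norm_integral_natCast_cpow_mul_conj_le {m n M : ℕ} (hm : m ∈ Icc 1 M)
    (hn : n ∈ Icc 1 M) {T : ℝ} (hT : 0 ≤ T) :
    ‖∫ t in T..2 * T, (m : ℂ) ^ (-(Complex.I * t)) * conj ((n : ℂ) ^ (-(Complex.I * t)))‖
      ≤ if m = n then T else 2 * M / |(m : ℝ) - n| := by
  rw [mem_Icc] at hm hn
  have hm0 : (0 : ℝ) < m := by exact_mod_cast hm.1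
  have hn0 : (0 : ℝ) < n := by exact_mod_cast hn.1
  simp only [natCast_cpow_mul_conj_natCast_cpow (by omega : m ≠ 0) (by omega : n ≠ 0)]
  split_ifs with hmn
  · subst hmn
    have : (2 * T : ℂ) - T = (T : ℝ) := by ring
    simp [this, abs_of_nonneg hT]
  · have hlog : Real.log n - Real.log m ≠ 0 := by
      rw [sub_ne_zero]
      intro h
      exact hmn (by exact_mod_cast (Real.log_injOn_pos hn0 hm0 h).symm)
    have hgap := abs_sub_div_le_abs_log_sub (M := M) hm0 hn0 (by exact_mod_cast hm.2)
      (by exact_mod_cast hn.2)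
    have hpos : 0 < |(m : ℝ) - n| / M := by
      have : (m : ℝ) ≠ n := by exact_mod_cast hmn
      have : (0 : ℝ) < M := by exact_mod_cast hm.1.trans hm.2
      positivity
    calc _ ≤ 2 / |Real.log n - Real.log m| := norm_integral_exp_ofReal_mul_I_le hlog _ _
      _ ≤ 2 / (|(m : ℝ) - n| / M) := by
        rw [abs_sub_comm (Real.log n)]
        gcongr
      _ = 2 * M / |(m : ℝ) - n| := by field_simp

theorem integral_norm_sum_sq_le {ι : Type*} (s : Finset ι) (c : ι → ℂ) {e : ι → ℝ → ℂ}
    (he : ∀ i ∈ s, Continuous (e i)) (a b : ℝ) :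
    ∫ t in a..b, ‖∑ i ∈ s, c i * e i t‖ ^ 2
      ≤ ∑ i ∈ s, ∑ j ∈ s, ‖c i‖ * ‖c j‖ * ‖∫ t in a..b, e i t * conj (e j t)‖ := by
  have hexpand : ∀ t : ℝ, ((‖∑ i ∈ s, c i * e i t‖ ^ 2 : ℝ) : ℂ)
      = ∑ i ∈ s, ∑ j ∈ s, c i * conj (c j) * (e i t * conj (e j t)) := by
    intro t
    rw [Complex.ofReal_pow, ← Complex.mul_conj', map_sum, sum_mul_sum]
    refine sum_congr rfl fun i _ => sum_congr rfl fun j _ => ?_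
    rw [map_mul]
    ring
  have hcont : ∀ i ∈ s, ∀ j ∈ s,
      Continuous fun t => c i * conj (c j) * (e i t * conj (e j t)) :=
    fun i hi j hj => continuous_const.mul ((he i hi).mul (Complex.continuous_conj.comp (he j hj)))
  have hintegral : ((∫ t in a..b, ‖∑ i ∈ s, c i * e i t‖ ^ 2 : ℝ) : ℂ)
      = ∑ i ∈ s, ∑ j ∈ s, c i * conj (c j) * ∫ t in a..b, e i t * conj (e j t) := by
    rw [← intervalIntegral.integral_ofReal, funext hexpand,
      intervalIntegral.integral_finsetSum fun i hi =>
        (continuous_finsetSum _ (hcont i hi)).intervalIntegrable a b]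
    refine sum_congr rfl fun i hi => ?_
    rw [intervalIntegral.integral_finsetSum fun j hj => (hcont i hi j hj).intervalIntegrable a b]
    exact sum_congr rfl fun j _ => intervalIntegral.integral_const_mul _ _
  calc _ ≤ ‖((∫ t in a..b, ‖∑ i ∈ s, c i * e i t‖ ^ 2 : ℝ) : ℂ)‖ := by
        rw [Complex.norm_real]
        exact Real.le_norm_self _
    _ ≤ _ := by
        rw [hintegral]
        refine (norm_sum_le _ _).trans (sum_le_sum fun i _ => (norm_sum_le _ _).trans ?_)
        simp only [norm_mul, Complex.norm_conj, le_refl]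

theorem integral_norm_sum_natCast_cpow_sq_le (c : ℕ → ℂ) (M : ℕ) {T : ℝ} (hT : 0 ≤ T) :
    ∫ t in T..2 * T, ‖∑ n ∈ Icc 1 M, c n * (n : ℂ) ^ (-(Complex.I * t))‖ ^ 2
      ≤ (T + 4 * M * harmonic M) * ∑ n ∈ Icc 1 M, ‖c n‖ ^ 2 := by
  set W : ℕ → ℕ → ℝ := fun m n => if m = n then T else 2 * M / |(m : ℝ) - n| with hW
  have hcont : ∀ n ∈ Icc 1 M, Continuous fun t : ℝ => (n : ℂ) ^ (-(Complex.I * t)) :=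
    fun n hn => (continuous_const.mul Complex.continuous_ofReal).neg.const_cpow
      (Or.inl (Nat.cast_ne_zero.mpr (by have := (mem_Icc.mp hn).1; omega)))
  have hW_nonneg : ∀ m ∈ Icc 1 M, ∀ n ∈ Icc 1 M, 0 ≤ W m n := fun m _ n _ => by
    simp only [hW]; split_ifs <;> positivity
  have hW_symm : ∀ m ∈ Icc 1 M, ∀ n ∈ Icc 1 M, W m n = W n m := fun m _ n _ => by
    simp only [hW, eq_comm (a := m), abs_sub_comm (m : ℝ)]
  have hW_row : ∀ m ∈ Icc 1 M, ∑ n ∈ Icc 1 M, W m n ≤ T + 4 * M * harmonic M := by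
    intro m hm
    rw [← add_sum_erase _ _ hm]
    have hoff : ∑ n ∈ (Icc 1 M).erase m, W m n
        = 2 * M * ∑ n ∈ (Icc 1 M).erase m, |(m : ℝ) - n|⁻¹ := by
      rw [mul_sum]
      exact sum_congr rfl fun n hn => by simp [hW, (ne_of_mem_erase hn).symm, div_eq_mul_inv]
    have hharmonic := sum_erase_inv_abs_sub_le (mem_Icc.mp hm).2
    rw [hoff, show W m m = T from if_pos rfl]
    nlinarith [(by positivity : (0 : ℝ) ≤ M)]
  calc _ ≤ ∑ m ∈ Icc 1 M, ∑ n ∈ Icc 1 M, ‖c m‖ * ‖c n‖ *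
        ‖∫ t in T..2 * T, (m : ℂ) ^ (-(Complex.I * t)) * conj ((n : ℂ) ^ (-(Complex.I * t)))‖ :=
        integral_norm_sum_sq_le _ _ hcont _ _
    _ ≤ ∑ m ∈ Icc 1 M, ∑ n ∈ Icc 1 M, ‖c m‖ * ‖c n‖ * W m n := by
        gcongr with m hm n hn
        exact norm_integral_natCast_cpow_mul_conj_le hm hn hT
    _ ≤ _ := sum_sum_mul_mul_le_of_sum_le _ _ hW_nonneg hW_symm hW_row

theorem exists_perm_eq_comp_of_perm_ofFn {α : Type*} [LinearOrder α] {k : ℕ} {f g : Fin k → α}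
    (h : (List.ofFn f).Perm (List.ofFn g)) : ∃ σ : Equiv.Perm (Fin k), g = f ∘ σ := by
  have hsorted : f ∘ Tuple.sort f = g ∘ Tuple.sort g :=
    List.ofFn_injective <| List.Perm.eq_of_sortedLE
      (Tuple.monotone_sort f).sortedLE_ofFn (Tuple.monotone_sort g).sortedLE_ofFn
      ((Equiv.Perm.ofFn_comp_perm _ f).trans
        (h.trans (Equiv.Perm.ofFn_comp_perm _ g).symm))
  refine ⟨(Tuple.sort g).symm.trans (Tuple.sort f), funext fun i => ?_⟩
  simpa using (congrFun hsorted ((Tuple.sort g).symm i)).symm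

theorem exists_perm_eq_comp_of_prod_eq {k : ℕ} {f g : Fin k → ℕ} (hf : ∀ i, (f i).Prime)
    (hg : ∀ i, (g i).Prime) (h : ∏ i, f i = ∏ i, g i) :
    ∃ σ : Equiv.Perm (Fin k), g = f ∘ σ := by
  refine exists_perm_eq_comp_of_perm_ofFn ?_
  have hfactors : ∀ {u : Fin k → ℕ}, (∀ i, (u i).Prime) →
      (List.ofFn u).Perm (∏ i, u i).primeFactorsList := fun hu =>
    Nat.primeFactorsList_unique List.prod_ofFn (by simpa [List.mem_ofFn] using hu)
  exact (hfactors hf).trans (h ▸ (hfactors hg).symm)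

theorem card_filter_prod_eq_le_factorial {P : Finset ℕ} (hP : ∀ p ∈ P, p.Prime) (k n : ℕ) :
    #{f ∈ Fintype.piFinset fun _ : Fin k => P | ∏ i, f i = n} ≤ k.factorial := by
  rcases eq_empty_or_nonempty {f ∈ Fintype.piFinset fun _ : Fin k => P | ∏ i, f i = n}
    with h | ⟨f₀, hf₀⟩
  · simp [h]
  have hprime : ∀ f ∈ {f ∈ Fintype.piFinset fun _ : Fin k => P | ∏ i, f i = n}, ∀ i, (f i).Prime :=
    fun f hf i => hP _ (Fintype.mem_piFinset.mp (mem_filter.mp hf).1 i)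
  calc _ ≤ #(univ.image fun σ : Equiv.Perm (Fin k) => f₀ ∘ σ) := by
        refine card_le_card fun g hg => ?_
        obtain ⟨σ, hσ⟩ := exists_perm_eq_comp_of_prod_eq (hprime f₀ hf₀) (hprime g hg)
          (by rw [(mem_filter.mp hf₀).2, (mem_filter.mp hg).2])
        exact mem_image.mpr ⟨σ, mem_univ _, hσ.symm⟩
    _ ≤ #(univ : Finset (Equiv.Perm (Fin k))) := card_image_le
    _ = k.factorial := by rw [card_univ, Fintype.card_perm, Fintype.card_fin]

theorem sum_norm_sum_fiberwise_sq_le {ι κ E : Type*} [DecidableEq κ] [SeminormedAddCommGroup E]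
    {s : Finset ι} {t : Finset κ} {g : ι → κ} (hg : ∀ i ∈ s, g i ∈ t) (A : ι → E) {K : ℕ}
    (hK : ∀ y ∈ t, #{x ∈ s | g x = y} ≤ K) :
    ∑ y ∈ t, ‖∑ x ∈ s with g x = y, A x‖ ^ 2 ≤ K * ∑ x ∈ s, ‖A x‖ ^ 2 := by
  calc _ ≤ ∑ y ∈ t, K * ∑ x ∈ s with g x = y, ‖A x‖ ^ 2 := by
        gcongr with y hy
        calc ‖∑ x ∈ s with g x = y, A x‖ ^ 2 ≤ (∑ x ∈ s with g x = y, ‖A x‖) ^ 2 := by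
              gcongr; exact norm_sum_le _ _
          _ ≤ #{x ∈ s | g x = y} * ∑ x ∈ s with g x = y, ‖A x‖ ^ 2 := sq_sum_le_card_mul_sum_sq
          _ ≤ K * ∑ x ∈ s with g x = y, ‖A x‖ ^ 2 := by gcongr; exact_mod_cast hK y hy
    _ = K * ∑ x ∈ s, ‖A x‖ ^ 2 := by rw [← mul_sum, sum_fiberwise_of_maps_to hg]

theorem natCast_prod_cpow {ι : Type*} (s : Finset ι) (f : ι → ℕ) (z : ℂ) :
    ((∏ i ∈ s, f i : ℕ) : ℂ) ^ z = ∏ i ∈ s, (f i : ℂ) ^ z := by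
  classical
  induction s using Finset.induction_on with
  | empty => simp
  | insert i s hi ih => rw [prod_insert hi, prod_insert hi, Nat.cast_mul,
      Complex.natCast_mul_natCast_cpow, ih]

theorem sum_mul_natCast_cpow_pow {P : Finset ℕ} (a : ℕ → ℂ) (k : ℕ) (z : ℂ) :
    (∑ p ∈ P, a p * (p : ℂ) ^ z) ^ k
      = ∑ f ∈ Fintype.piFinset fun _ : Fin k => P, (∏ i, a (f i)) * ((∏ i, f i : ℕ) : ℂ) ^ z := by
  rw [← Fin.prod_const, prod_univ_sum]
  exact sum_congr rfl fun f _ => by rw [prod_mul_distrib, natCast_prod_cpow]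

theorem sum_piFinset_norm_prod_sq {α 𝕜 : Type*} [NormedField 𝕜] (P : Finset α) (a : α → 𝕜)
    (k : ℕ) :
    ∑ f ∈ Fintype.piFinset fun _ : Fin k => P, ‖∏ i, a (f i)‖ ^ 2 = (∑ p ∈ P, ‖a p‖ ^ 2) ^ k := by
  rw [← Fin.prod_const, prod_univ_sum]
  simp only [norm_prod, prod_pow]

theorem natCast_mul_harmonic_le {M : ℕ} {T : ℝ} (hT : 3 ≤ T) (hM : (M : ℝ) ≤ T / Real.log T) :
    M * harmonic M ≤ 2 * T := by
  rcases M.eq_zero_or_pos with rfl | hM0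
  · rw [Nat.cast_zero, zero_mul]; linarith
  have hlogT : 1 ≤ Real.log T := by
    rw [Real.le_log_iff_exp_le (by linarith)]
    linarith [Real.exp_one_lt_d9]
  have hMT : (M : ℝ) ≤ T := hM.trans (div_le_self (by linarith) hlogT)
  have hH : (harmonic M : ℝ) ≤ 2 * Real.log T := by
    linarith [harmonic_le_one_add_log M, Real.log_le_log (by exact_mod_cast hM0) hMT]
  calc (M : ℝ) * harmonic M ≤ T / Real.log T * (2 * Real.log T) :=
        mul_le_mul hM hH (by exact_mod_cast (harmonic_pos hM0.ne').le)
          (div_nonneg (by linarith) (by linarith))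
    _ = 2 * T := by field_simp

/-- Soundararajan's moment bound for Dirichlet polynomials supported on primes:
if `N^k ≤ T/log T` then `∫_T^{2T} |∑_{p ≤ N} a_p p^{-it}|^{2k} dt ≪ T k! (∑ |a_p|²)^k`. -/
theorem stmt5 : ∃ C > 0, ∀ (T : ℝ) (N k : ℕ) (a : ℕ → ℂ), 3 ≤ T → 1 ≤ k →
    (N : ℝ) ^ k ≤ T / Real.log T →
    (∫ t in T..(2 * T),
      ‖∑ p ∈ (Finset.range (N + 1)).filter Nat.Prime,
        a p * (p : ℂ) ^ (-(Complex.I * (t : ℂ)))‖ ^ (2 * k))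
    ≤ C * T * k.factorial *
        (∑ p ∈ (Finset.range (N + 1)).filter Nat.Prime, ‖a p‖ ^ 2) ^ k := by
  refine ⟨9, by norm_num, fun T N k a hT _ hNk => ?_⟩
  set P := (range (N + 1)).filter Nat.Prime
  set F := Fintype.piFinset fun _ : Fin k => P
  have hP : ∀ p ∈ P, p.Prime := fun p hp => (mem_filter.mp hp).2
  have hF : ∀ f ∈ F, ∏ i, f i ∈ Icc 1 (N ^ k) := fun f hf => by
    have hfP := Fintype.mem_piFinset.mp hf
    refine mem_Icc.mpr ⟨Nat.one_le_iff_ne_zero.mpr (prod_ne_zero_iff.mpr fun i _ =>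
      (hP _ (hfP i)).ne_zero), ?_⟩
    simpa using prod_le_pow_card univ (fun i => f i) N fun i _ =>
      Nat.lt_succ_iff.mp (mem_range.mp (mem_filter.mp (hfP i)).1)
  set c : ℕ → ℂ := fun n => ∑ f ∈ F with ∏ i, f i = n, ∏ i, a (f i)
  have hpow : ∀ t : ℝ, (∑ p ∈ P, a p * (p : ℂ) ^ (-(Complex.I * t))) ^ k
      = ∑ n ∈ Icc 1 (N ^ k), c n * (n : ℂ) ^ (-(Complex.I * t)) := fun t => by
    rw [sum_mul_natCast_cpow_pow, ← sum_fiberwise_of_maps_to hF]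
    refine sum_congr rfl fun n _ => ?_
    rw [sum_mul]
    exact sum_congr rfl fun f hf => by rw [(mem_filter.mp hf).2]
  calc _ = ∫ t in T..2 * T, ‖∑ n ∈ Icc 1 (N ^ k), c n * (n : ℂ) ^ (-(Complex.I * t))‖ ^ 2 := by
        simp only [pow_mul', ← norm_pow, hpow]
    _ ≤ (T + 4 * ↑(N ^ k) * harmonic (N ^ k)) * ∑ n ∈ Icc 1 (N ^ k), ‖c n‖ ^ 2 :=
        integral_norm_sum_natCast_cpow_sq_le c _ (by linarith)
    _ ≤ 9 * T * (k.factorial * (∑ p ∈ P, ‖a p‖ ^ 2) ^ k) := by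
        gcongr
        · linarith [natCast_mul_harmonic_le hT (M := N ^ k) (by exact_mod_cast hNk)]
        · rw [← sum_piFinset_norm_prod_sq]
          exact sum_norm_sum_fiberwise_sq_le hF _ fun n _ => card_filter_prod_eq_le_factorial hP k n
    _ = _ := by ring
end

section
/- Let k be a natural number and Q(s) := ∑_{e^l < p ≤ e^{l+1}} 1/(2 p^{2s}) with k = ⌈l e^{4l/5}⌉ and T large enough that e^{2(l+1)k} ≤ T/log T. Then ∫_T^{2T} |e^{l/10} Q(1/2 + it)|^{2k} dt ≪ T e^{-l e^{l/2}}. -/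
/-- `Q_l(z) = ∑_{e^l < p ≤ e^{l+1}} 1/(2 p^{2z})`, sum over primes. -/
noncomputable def Qpoly (l : ℕ) (z : ℂ) : ℂ :=
  ∑ p ∈ (Finset.Ioc ⌊Real.exp l⌋₊ ⌊Real.exp ((l : ℝ) + 1)⌋₊).filter Nat.Prime,
    1 / (2 * (p : ℂ) ^ (2 * z))

/-!
On the critical line `Q(1/2 + it) = ∑ a_p p^{-2it}` with `a_p = 1/(2p)`. Expanding
`|Q|^{2k} = |Q^k|^2` over pairs of `k`-tuples of primes and integrating over `[T, 2T]`, the pairs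
with equal products keep their full weight, and by unique factorisation these add up to at most
`T k! (∑ a_p²)^k`; the other pairs oscillate with frequency `2 |log m - log n| ≥ 2 e^{-(l+1)k}`
and contribute at most `e^{(l+1)k} (∑ a_p)^{2k}`. Chebyshev's bound `θ(x) ≤ x log 4` gives
`l ∑ a_p² ≤ (log 4 / 4) e^{1-l}`, so by Stirling and `k ≈ l e^{4l/5}` the first part is
`≪ T e^{-k/4}`; the condition `e^{2(l+1)k} ≤ T` makes the second one `≤ T e^{-k/4}` too, and
`k/4 ≥ l e^{l/2} - O(1)`.
-/

open Finset Real
open scoped Nat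

lemma norm_integral_exp_mul_I_le {θ : ℝ} (hθ : θ ≠ 0) (a b : ℝ) :
    ‖∫ t in a..b, Complex.exp (θ * t * Complex.I)‖ ≤ 2 / |θ| := by
  have hc : (θ : ℂ) * Complex.I ≠ 0 := mul_ne_zero (by exact_mod_cast hθ) Complex.I_ne_zero
  have hnorm : ∀ s : ℝ, ‖Complex.exp (θ * Complex.I * s)‖ = 1 := fun s => by
    rw [mul_right_comm, ← Complex.ofReal_mul, Complex.norm_exp_ofReal_mul_I]
  simp_rw [mul_right_comm _ _ Complex.I]
  rw [integral_exp_mul_complex hc, norm_div, Complex.norm_mul, Complex.norm_I, mul_one,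
    Complex.norm_real, Real.norm_eq_abs]
  gcongr
  calc _ ≤ ‖Complex.exp (θ * Complex.I * b)‖ + ‖Complex.exp (θ * Complex.I * a)‖ := norm_sub_le _ _
    _ = 2 := by rw [hnorm, hnorm]; norm_num

lemma norm_integral_exp_mul_I_le_ite {θ δ : ℝ} (hδ : θ ≠ 0 → δ ≤ |θ|) (hδ0 : 0 < δ)
    {a b : ℝ} (hab : a ≤ b) :
    ‖∫ t in a..b, Complex.exp (θ * t * Complex.I)‖ ≤ if θ = 0 then b - a else 2 / δ := by
  split_ifs with hθ
  · simp only [hθ, Complex.ofReal_zero, zero_mul, Complex.exp_zero, intervalIntegral.integral_const,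
      Complex.real_smul, mul_one]
    rw [Complex.norm_real, Real.norm_of_nonneg (sub_nonneg.2 hab)]
  · exact (norm_integral_exp_mul_I_le hθ a b).trans
      (div_le_div_of_nonneg_left zero_le_two hδ0 (hδ hθ))

lemma integral_norm_sum_exp_sq_le {ι : Type*} (s : Finset ι) (c : ι → ℂ) (ω : ι → ℝ) {δ : ℝ}
    (hδ : 0 < δ) (hgap : ∀ i ∈ s, ∀ j ∈ s, ω i ≠ ω j → δ ≤ |ω i - ω j|) {a b : ℝ} (hab : a ≤ b) :
    ∫ t in a..b, ‖∑ i ∈ s, c i * Complex.exp (ω i * t * Complex.I)‖ ^ 2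
      ≤ (b - a) * ∑ i ∈ s, ∑ j ∈ s, (if ω i = ω j then ‖c i‖ * ‖c j‖ else 0)
        + 2 / δ * (∑ i ∈ s, ‖c i‖) ^ 2 := by
  have hexpand : ∀ t : ℝ, ((‖∑ i ∈ s, c i * Complex.exp (ω i * t * Complex.I)‖ ^ 2 : ℝ) : ℂ)
      = ∑ i ∈ s, ∑ j ∈ s, c i * (starRingEnd ℂ) (c j) *
          Complex.exp ((ω i - ω j : ℝ) * t * Complex.I) := by
    intro t
    rw [Complex.ofReal_pow, ← Complex.mul_conj', map_sum, sum_mul_sum]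
    refine sum_congr rfl fun i _ => sum_congr rfl fun j _ => ?_
    rw [map_mul, ← Complex.exp_conj, map_mul, map_mul, Complex.conj_ofReal, Complex.conj_ofReal,
      Complex.conj_I]
    rw [show ((ω i - ω j : ℝ) : ℂ) * t * Complex.I
      = ω i * t * Complex.I + ω j * t * (-Complex.I) by push_cast; ring, Complex.exp_add]
    ring
  have hint : ((∫ t in a..b, ‖∑ i ∈ s, c i * Complex.exp (ω i * t * Complex.I)‖ ^ 2 : ℝ) : ℂ)
      = ∑ i ∈ s, ∑ j ∈ s, c i * (starRingEnd ℂ) (c j) *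
          ∫ t in a..b, Complex.exp ((ω i - ω j : ℝ) * t * Complex.I) := by
    rw [← intervalIntegral.integral_ofReal]
    simp_rw [hexpand]
    rw [intervalIntegral.integral_finsetSum fun i _ => ?_]
    · refine sum_congr rfl fun i _ => ?_
      rw [intervalIntegral.integral_finsetSum fun j _ => ?_]
      · exact sum_congr rfl fun j _ => intervalIntegral.integral_const_mul _ _
      · exact (by fun_prop : Continuous _).intervalIntegrable _ _
    · exact (continuous_finsetSum _ fun j _ => by fun_prop).intervalIntegrable _ _
  calc _ ≤ ‖((∫ t in a..b, ‖∑ i ∈ s, c i * Complex.exp (ω i * t * Complex.I)‖ ^ 2 : ℝ) : ℂ)‖ :=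
        by rw [Complex.norm_real]; exact le_abs_self _
    _ ≤ ∑ i ∈ s, ∑ j ∈ s, ‖c i‖ * ‖c j‖ * (if ω i = ω j then b - a else 2 / δ) := by
        rw [hint]
        refine (norm_sum_le _ _).trans (sum_le_sum fun i hi => (norm_sum_le _ _).trans
          (sum_le_sum fun j hj => ?_))
        rw [norm_mul, norm_mul, Complex.norm_conj]
        gcongr
        simpa only [sub_eq_zero] using
          norm_integral_exp_mul_I_le_ite (fun h => hgap i hi j hj (sub_ne_zero.1 h)) hδ hab
    _ ≤ _ := by
        rw [sq, sum_mul_sum, mul_sum, mul_sum, ← sum_add_distrib]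
        refine sum_le_sum fun i _ => ?_
        rw [mul_sum, mul_sum, ← sum_add_distrib]
        refine sum_le_sum fun j _ => ?_
        have : 0 ≤ 2 / δ * (‖c i‖ * ‖c j‖) := by positivity
        split_ifs <;> nlinarith

lemma inv_le_abs_log_sub_log {m n : ℕ} (hm : 0 < m) (hn : 0 < n) (hmn : m ≠ n) {N : ℝ}
    (hmN : (m : ℝ) ≤ N) (hnN : (n : ℝ) ≤ N) : N⁻¹ ≤ |log m - log n| := by
  wlog hlt : m < n generalizing m n
  · rw [abs_sub_comm]
    exact this hn hm (Ne.symm hmn) hnN hmN (by omega)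
  have hm' : (0 : ℝ) < m := by exact_mod_cast hm
  have hn' : (0 : ℝ) < n := by exact_mod_cast hn
  have hgap : (1 : ℝ) ≤ n - m := by
    have : (m : ℝ) + 1 ≤ n := by exact_mod_cast hlt
    linarith
  calc N⁻¹ ≤ (n : ℝ)⁻¹ := inv_anti₀ hn' hnN
    _ ≤ 1 - ((n : ℝ) / m)⁻¹ := by
        rw [inv_div, one_sub_div hn'.ne', le_div_iff₀ hn', inv_mul_cancel₀ hn'.ne']
        exact hgap
    _ ≤ log (n / m) := one_sub_inv_le_log_of_pos (by positivity)
    _ = |log m - log n| := by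
        rw [log_div hn'.ne' hm'.ne', abs_sub_comm, abs_of_nonneg]
        exact sub_nonneg.2 (log_le_log hm' (by exact_mod_cast hlt.le))

lemma sum_mul_exp_pow {ι : Type*} (s : Finset ι) (c : ι → ℂ) (ω : ι → ℝ) (t : ℝ) (k : ℕ) :
    (∑ i ∈ s, c i * Complex.exp (ω i * t * Complex.I)) ^ k
      = ∑ f ∈ Fintype.piFinset fun _ : Fin k => s,
          (∏ j, c (f j)) * Complex.exp ((∑ j, ω (f j) : ℝ) * t * Complex.I) := by
  rw [← Fin.prod_const, prod_univ_sum]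
  refine sum_congr rfl fun f _ => ?_
  rw [prod_mul_distrib, ← Complex.exp_sum]
  push_cast
  rw [sum_mul, sum_mul]

lemma perm_ofFn_of_prod_eq {k : ℕ} {f g : Fin k → ℕ} (hf : ∀ i, (f i).Prime)
    (hg : ∀ i, (g i).Prime) (h : ∏ i, f i = ∏ i, g i) : (List.ofFn f).Perm (List.ofFn g) := by
  have hfac : ∀ u : Fin k → ℕ, (∀ i, (u i).Prime) →
      (List.ofFn u).Perm (∏ i, u i).primeFactorsList := fun u hu =>
    Nat.primeFactorsList_unique List.prod_ofFn fun p hp => by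
      obtain ⟨i, rfl⟩ := List.mem_ofFn.1 hp
      exact hu i
  exact (hfac f hf).trans (h ▸ (hfac g hg).symm)

lemma prod_comp_eq_of_perm_ofFn {α M : Type*} [CommMonoid M] (b : α → M) {k : ℕ}
    {f g : Fin k → α} (h : (List.ofFn f).Perm (List.ofFn g)) : ∏ i, b (f i) = ∏ i, b (g i) := by
  rw [← List.prod_ofFn, ← List.prod_ofFn]
  simpa only [List.map_ofFn, Function.comp_def] using (h.map b).prod_eq

lemma card_filter_perm_ofFn_le {α : Type*} [DecidableEq α] {k : ℕ} (s : Finset (Fin k → α))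
    (f : Fin k → α) : #{g ∈ s | (List.ofFn f).Perm (List.ofFn g)} ≤ k ! := by
  calc #{g ∈ s | (List.ofFn f).Perm (List.ofFn g)} ≤ (List.ofFn f).permutations.toFinset.card :=
        card_le_card_of_injOn List.ofFn
          (fun g hg => by simpa using (mem_filter.1 hg).2.symm)
          (fun _ _ _ _ h => List.ofFn_injective h)
    _ ≤ k ! := by
        simpa [List.length_permutations] using List.toFinset_card_le (List.ofFn f).permutations

lemma sum_piFinset_ite_prod_eq_le (P : Finset ℕ) (hP : ∀ p ∈ P, p.Prime) (b : ℕ → ℝ) (k : ℕ) :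
    ∑ f ∈ Fintype.piFinset (fun _ : Fin k => P), ∑ g ∈ Fintype.piFinset (fun _ : Fin k => P),
      (if ∏ i, f i = ∏ i, g i then (∏ i, b (f i)) * ∏ i, b (g i) else 0)
    ≤ k ! * (∑ p ∈ P, b p ^ 2) ^ k := by
  have hprime : ∀ f ∈ Fintype.piFinset (fun _ : Fin k => P), ∀ i, (f i).Prime :=
    fun f hf i => hP _ (Fintype.mem_piFinset.1 hf i)
  calc _ ≤ ∑ f ∈ Fintype.piFinset (fun _ : Fin k => P), (k ! : ℝ) * ∏ i, b (f i) ^ 2 := by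
        refine sum_le_sum fun f hf => ?_
        rw [← sum_filter]
        calc _ = ∑ g ∈ Fintype.piFinset (fun _ : Fin k => P) with ∏ i, f i = ∏ i, g i,
              ∏ i, b (f i) ^ 2 := by
              refine sum_congr rfl fun g hg => ?_
              obtain ⟨hg, hfg⟩ := mem_filter.1 hg
              rw [← prod_comp_eq_of_perm_ofFn b
                (perm_ofFn_of_prod_eq (hprime f hf) (hprime g hg) hfg), ← prod_mul_distrib]
              simp only [sq]
          _ ≤ _ := by
              rw [sum_const, nsmul_eq_mul]
              gcongr
              refine (card_le_card fun g hg => ?_).trans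
                (card_filter_perm_ofFn_le (Fintype.piFinset fun _ : Fin k => P) f)
              obtain ⟨hg, hfg⟩ := mem_filter.1 hg
              exact mem_filter.2 ⟨hg, perm_ofFn_of_prod_eq (hprime f hf) (hprime g hg) hfg⟩
    _ = _ := by rw [← mul_sum, ← Fin.prod_const, prod_univ_sum]

theorem integral_norm_sum_prime_pow_le (P : Finset ℕ) (hP : ∀ p ∈ P, p.Prime) (c : ℕ → ℂ)
    (k : ℕ) {M : ℝ} (hM0 : 0 < M) (hM : ∀ p ∈ P, (p : ℝ) ≤ M) {a b : ℝ} (hab : a ≤ b) :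
    ∫ t in a..b, ‖∑ p ∈ P, c p * Complex.exp (↑(-2 * log p) * t * Complex.I)‖ ^ (2 * k)
      ≤ (b - a) * k ! * (∑ p ∈ P, ‖c p‖ ^ 2) ^ k + M ^ k * (∑ p ∈ P, ‖c p‖) ^ (2 * k) := by
  set S := Fintype.piFinset fun _ : Fin k => P
  have hprime : ∀ f ∈ S, ∀ i, (f i).Prime := fun f hf i => hP _ (Fintype.mem_piFinset.1 hf i)
  have hpos : ∀ f ∈ S, 0 < ∏ i, f i := fun f hf =>
    prod_pos fun i _ => (hprime f hf i).pos
  have hle : ∀ f ∈ S, ((∏ i, f i : ℕ) : ℝ) ≤ M ^ k := fun f hf => by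
    rw [Nat.cast_prod, ← Fin.prod_const]
    exact prod_le_prod (fun i _ => Nat.cast_nonneg _) fun i _ => hM _ (Fintype.mem_piFinset.1 hf i)
  have hfreq : ∀ f ∈ S, ∑ j, -2 * log (f j) = -2 * log (∏ j, f j : ℕ) := fun f hf => by
    rw [← mul_sum, Nat.cast_prod, log_prod fun j _ => by exact_mod_cast (hprime f hf j).ne_zero]
  have hpow : ∀ t : ℝ,
      ‖∑ p ∈ P, c p * Complex.exp (↑(-2 * log p) * t * Complex.I)‖ ^ (2 * k)
        = ‖∑ f ∈ S, (∏ j, c (f j)) *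
            Complex.exp (↑(-2 * log (∏ j, f j : ℕ)) * t * Complex.I)‖ ^ 2 := fun t => by
    rw [pow_mul', ← norm_pow, sum_mul_exp_pow]
    exact congrArg (‖·‖ ^ 2) (sum_congr rfl fun f hf => by rw [hfreq f hf])
  simp only [hpow]
  refine (integral_norm_sum_exp_sq_le S _ _ (δ := 2 / M ^ k) (by positivity) ?_ hab).trans ?_
  · intro f hf g hg hne
    have hfg : ∏ i, f i ≠ ∏ i, g i := fun h => hne (by rw [h])
    rw [← mul_sub, abs_mul, abs_neg, abs_two, div_eq_mul_inv]
    gcongr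
    exact inv_le_abs_log_sub_log (hpos f hf) (hpos g hg) hfg (hle f hf) (hle g hg)
  · have hdiag : ∀ f ∈ S, ∀ g ∈ S,
        (-2 * log (∏ j, f j : ℕ) = -2 * log (∏ j, g j : ℕ)) ↔ ∏ j, f j = ∏ j, g j :=
      fun f hf g hg => by
        rw [mul_right_inj' (by norm_num), Real.log_injOn_pos.eq_iff
          (Set.mem_Ioi.2 (Nat.cast_pos.2 (hpos f hf)))
          (Set.mem_Ioi.2 (Nat.cast_pos.2 (hpos g hg))), Nat.cast_inj]
    have hsum : ∑ f ∈ S, ‖∏ j, c (f j)‖ = (∑ p ∈ P, ‖c p‖) ^ k := by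
      simp_rw [norm_prod]
      rw [← Fin.prod_const, prod_univ_sum]
    gcongr ?_ + ?_
    · rw [mul_assoc]
      gcongr
      refine le_of_eq_of_le (sum_congr rfl fun f hf => sum_congr rfl fun g hg => ?_)
        (sum_piFinset_ite_prod_eq_le P hP (‖c ·‖) k)
      simp only [hdiag f hf g hg, norm_prod]
    · rw [hsum, div_div_cancel₀ two_ne_zero, ← pow_mul, mul_comm k]

lemma factorial_le_exp_one_mul_sqrt {n : ℕ} (hn : n ≠ 0) :
    (n ! : ℝ) ≤ exp 1 * √n * (n / exp 1) ^ n := by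
  obtain ⟨m, rfl⟩ := Nat.exists_eq_add_one_of_ne_zero hn
  have h : Stirling.stirlingSeq (m + 1) ≤ Stirling.stirlingSeq 1 :=
    Stirling.stirlingSeq'_antitone (Nat.zero_le m)
  rw [Stirling.stirlingSeq_one, Stirling.stirlingSeq, Real.sqrt_mul zero_le_two,
    div_le_div_iff₀ (by positivity) (by positivity)] at h
  refine le_of_mul_le_mul_right ?_ (by positivity : (0 : ℝ) < √2)
  linarith

lemma exp_neg_div_four_le {x k : ℝ} (hx : 0 ≤ x) (hk : x * exp (4 * x / 5) ≤ k) :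
    exp (-(k / 4)) ≤ exp (10 * exp 5) * exp (-x * exp (x / 2)) := by
  rw [← exp_add, exp_le_exp]
  rcases le_total x 10 with hx10 | hx10
  · have : x * exp (x / 2) ≤ 10 * exp 5 :=
      mul_le_mul hx10 (exp_le_exp.2 (by linarith)) (exp_pos _).le (by norm_num)
    linarith [hx.trans (le_mul_of_one_le_right hx (one_le_exp (by positivity))) |>.trans hk]
  · have h4 : 4 ≤ exp (3 * x / 10) := by linarith [add_one_le_exp (3 * x / 10)]
    have : exp (4 * x / 5) = exp (x / 2) * exp (3 * x / 10) := by rw [← exp_add]; ring_nf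
    rw [this] at hk
    nlinarith [mul_nonneg hx (exp_pos (x / 2)).le, exp_pos 5]

lemma exp_mul_div_exp_one_mul_le {x B : ℝ} {k : ℕ} (hx : 1 ≤ x)
    (hk : k ≤ x * exp (4 * x / 5) + 1) (hB : B * x ≤ log 4 / 4 * exp (1 - x)) :
    exp (x / 5) * (k / exp 1) * B ≤ exp (-(1 / 2)) := by
  have h45 : 2 ≤ exp (4 / 5) := by
    nlinarith [quadratic_le_exp_of_nonneg (show (0 : ℝ) ≤ 4 / 5 by norm_num)]
  have hdecay : exp (-(4 * x / 5)) ≤ x / 2 :=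
    calc exp (-(4 * x / 5)) ≤ exp (-(4 / 5)) := exp_le_exp.2 (by linarith)
      _ = (exp (4 / 5))⁻¹ := exp_neg _
      _ ≤ 2⁻¹ := inv_anti₀ (by norm_num) h45
      _ ≤ x / 2 := by linarith
  have hkx : k * exp (-(4 * x / 5)) ≤ 3 * x / 2 := by
    have hinv : exp (4 * x / 5) * exp (-(4 * x / 5)) = 1 := by rw [← exp_add]; simp
    nlinarith [mul_le_mul_of_nonneg_right hk (exp_pos (-(4 * x / 5))).le]
  have hmul : exp (x / 5) * (k / exp 1) * B * x ≤ log 4 / 4 * (k * exp (-(4 * x / 5))) := by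
    calc exp (x / 5) * (k / exp 1) * B * x = exp (x / 5) * (k / exp 1) * (B * x) := by ring
      _ ≤ exp (x / 5) * (k / exp 1) * (log 4 / 4 * exp (1 - x)) := by gcongr
      _ = log 4 / 4 * (k * exp (-(4 * x / 5))) := by
          rw [show -(4 * x / 5) = x / 5 + (1 - x) - 1 by ring, exp_sub _ 1, exp_add (x / 5)]
          field_simp
  -- `(3 / 8) log 4 < 0.52 < e^{-1/2}`
  have hlog4 : log 4 ≤ 1.3863 := by
    rw [show (4 : ℝ) = 2 ^ 2 by norm_num, log_pow]
    linarith [log_two_lt_d9]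
  have hhalf : (0.52 : ℝ) ≤ exp (-(1 / 2)) := by
    have hsq : exp (1 / 2) ^ 2 = exp 1 := by rw [← exp_nat_mul]; norm_num
    rw [exp_neg, le_inv_comm₀ (by norm_num) (exp_pos _)]
    nlinarith [exp_one_lt_d9, exp_pos (1 / 2)]
  nlinarith [mul_le_mul_of_nonneg_left hkx (log_nonneg (by norm_num) : (0 : ℝ) ≤ log 4)]

lemma exp_pow_mul_factorial_mul_pow_le {x B : ℝ} {k : ℕ} (hx : 1 ≤ x) (hk0 : k ≠ 0)
    (hk : k ≤ x * exp (4 * x / 5) + 1) (hB0 : 0 ≤ B) (hB : B * x ≤ log 4 / 4 * exp (1 - x)) :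
    exp (x / 10) ^ (2 * k) * k ! * B ^ k ≤ 4 * exp 1 * exp (-(k / 4)) := by
  have hk1 : (1 : ℝ) ≤ k := by exact_mod_cast Nat.one_le_iff_ne_zero.2 hk0
  have hβ := exp_mul_div_exp_one_mul_le hx hk hB
  calc exp (x / 10) ^ (2 * k) * k ! * B ^ k
      ≤ exp (x / 10) ^ (2 * k) * (exp 1 * √k * (k / exp 1) ^ k) * B ^ k := by
        gcongr
        exact factorial_le_exp_one_mul_sqrt hk0
    _ = exp 1 * √k * (exp (x / 5) * (k / exp 1) * B) ^ k := by
        rw [pow_mul, ← exp_nat_mul, mul_pow, mul_pow]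
        ring_nf
    _ ≤ exp 1 * (4 * exp (k / 4)) * exp (-(1 / 2)) ^ k := by
        gcongr
        exact (Real.sqrt_le_self_iff.2 (Or.inr hk1)).trans
          (by linarith [add_one_le_exp (k / 4 : ℝ)])
    _ = 4 * exp 1 * exp (-(k / 4)) := by
        rw [← exp_nat_mul, mul_assoc, mul_assoc, ← exp_add]
        ring_nf

lemma exp_pow_mul_exp_pow_mul_pow_le {x S T : ℝ} {k : ℕ} (hx : 1 ≤ x) (hS : S ^ 2 ≤ exp 1)
    (hT : exp (2 * (x + 1) * k) ≤ T) :
    exp (x / 10) ^ (2 * k) * exp (x + 1) ^ k * S ^ (2 * k) ≤ T * exp (-(k / 4)) := by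
  calc _ ≤ exp (x / 10) ^ (2 * k) * exp (x + 1) ^ k * exp 1 ^ k := by
        rw [pow_mul S]; gcongr
    _ = exp (2 * (x + 1) * k) * exp (-(4 * x / 5 * k)) := by
        simp only [← exp_nat_mul, ← exp_add]; push_cast; ring_nf
    _ ≤ T * exp (-(k / 4)) := by
        have : 0 ≤ T := (exp_pos _).le.trans hT
        gcongr
        nlinarith [(Nat.cast_nonneg k : (0 : ℝ) ≤ k)]

noncomputable def primesInExpBlock (x : ℝ) : Finset ℕ := {p ∈ Ioc ⌊exp x⌋₊ ⌊exp (x + 1)⌋₊ | p.Prime}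

section primesInExpBlock

variable {x : ℝ} {p : ℕ}

lemma prime_of_mem_primesInExpBlock (hp : p ∈ primesInExpBlock x) : p.Prime :=
  (mem_filter.1 hp).2

lemma exp_lt_of_mem_primesInExpBlock (hp : p ∈ primesInExpBlock x) : exp x < p :=
  Nat.lt_of_floor_lt (mem_Ioc.1 (mem_filter.1 hp).1).1

lemma le_exp_of_mem_primesInExpBlock (hp : p ∈ primesInExpBlock x) : (p : ℝ) ≤ exp (x + 1) :=
  (Nat.le_floor_iff (exp_pos _).le).1 (mem_Ioc.1 (mem_filter.1 hp).1).2

lemma inv_two_mul_le_of_mem_primesInExpBlock (hp : p ∈ primesInExpBlock x) :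
    (2 * (p : ℝ))⁻¹ ≤ exp (-x) / 2 := by
  rw [exp_neg, ← inv_mul_eq_div, ← mul_inv]
  exact inv_anti₀ (by positivity) (by linarith [exp_lt_of_mem_primesInExpBlock hp])

lemma card_primesInExpBlock_le (x : ℝ) : (#(primesInExpBlock x) : ℝ) ≤ exp (x + 1) := by
  refine le_trans ?_ (Nat.floor_le (exp_pos _).le)
  exact_mod_cast (card_filter_le _ _).trans ((Nat.card_Ioc _ _).trans_le (Nat.sub_le _ _))

lemma card_primesInExpBlock_mul_le (x : ℝ) :
    #(primesInExpBlock x) * x ≤ log 4 * exp (x + 1) := by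
  calc #(primesInExpBlock x) * x = ∑ _p ∈ primesInExpBlock x, x := by rw [sum_const, nsmul_eq_mul]
    _ ≤ ∑ p ∈ primesInExpBlock x, log p := sum_le_sum fun p hp =>
        (lt_log_iff_exp_lt (by linarith [exp_pos x, exp_lt_of_mem_primesInExpBlock hp])).2
          (exp_lt_of_mem_primesInExpBlock hp) |>.le
    _ ≤ Chebyshev.theta (exp (x + 1)) := by
        refine sum_le_sum_of_subset_of_nonneg (filter_subset_filter _ (Ioc_subset_Ioc_left
          (Nat.zero_le _))) fun p _ _ => log_natCast_nonneg p
    _ ≤ log 4 * exp (x + 1) := Chebyshev.theta_le_log4_mul_x (exp_pos _).le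

lemma sum_inv_two_mul_sq_mul_le {x : ℝ} (hx : 0 ≤ x) :
    (∑ p ∈ primesInExpBlock x, (2 * (p : ℝ))⁻¹ ^ 2) * x ≤ log 4 / 4 * exp (1 - x) := by
  calc (∑ p ∈ primesInExpBlock x, (2 * (p : ℝ))⁻¹ ^ 2) * x
      ≤ #(primesInExpBlock x) * (exp (-x) / 2) ^ 2 * x := by
        gcongr
        rw [← nsmul_eq_mul]
        exact sum_le_card_nsmul _ _ _ fun p hp => by
          gcongr; exact inv_two_mul_le_of_mem_primesInExpBlock hp
    _ = #(primesInExpBlock x) * x * (exp (-x) ^ 2 / 4) := by ring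
    _ ≤ log 4 * exp (x + 1) * (exp (-x) ^ 2 / 4) := by
        exact mul_le_mul_of_nonneg_right (card_primesInExpBlock_mul_le x) (by positivity)
    _ = log 4 / 4 * exp (1 - x) := by
        rw [← exp_nat_mul, mul_div_assoc', mul_assoc, ← exp_add]
        ring_nf

lemma sq_sum_inv_two_mul_le (x : ℝ) :
    (∑ p ∈ primesInExpBlock x, (2 * (p : ℝ))⁻¹) ^ 2 ≤ exp 1 := by
  have hsum : ∑ p ∈ primesInExpBlock x, (2 * (p : ℝ))⁻¹ ≤ exp 1 / 2 :=
    calc _ ≤ #(primesInExpBlock x) * (exp (-x) / 2) := by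
          rw [← nsmul_eq_mul]
          exact sum_le_card_nsmul _ _ _ fun p hp => inv_two_mul_le_of_mem_primesInExpBlock hp
      _ ≤ exp (x + 1) * (exp (-x) / 2) := by gcongr; exact card_primesInExpBlock_le x
      _ = exp 1 / 2 := by rw [mul_div_assoc', ← exp_add]; ring_nf
  have h0 : 0 ≤ ∑ p ∈ primesInExpBlock x, (2 * (p : ℝ))⁻¹ := by positivity
  nlinarith [exp_one_lt_d9, exp_pos 1]

end primesInExpBlock

lemma one_div_two_mul_cpow_eq {p : ℕ} (hp : p ≠ 0) (t : ℝ) :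
    1 / (2 * (p : ℂ) ^ (2 * (1 / 2 + Complex.I * t)))
      = (2 * (p : ℂ))⁻¹ * Complex.exp (↑(-2 * log p) * t * Complex.I) := by
  have hp' : (p : ℂ) ≠ 0 := Nat.cast_ne_zero.2 hp
  rw [show 2 * (1 / 2 + Complex.I * t) = 1 + 2 * Complex.I * t by ring,
    Complex.cpow_add _ _ hp', Complex.cpow_one, Complex.cpow_def_of_ne_zero hp',
    ← Complex.natCast_log]
  have hexp : Complex.exp (↑(-2 * log p) * t * Complex.I)
      = (Complex.exp (log p * (2 * Complex.I * t)))⁻¹ := by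
    rw [← Complex.exp_neg]; push_cast; ring_nf
  rw [hexp, one_div, mul_inv, mul_inv, mul_inv, ← mul_assoc]

lemma Qpoly_half_add_I_mul (l : ℕ) (t : ℝ) :
    Qpoly l (1 / 2 + Complex.I * t)
      = ∑ p ∈ primesInExpBlock l, (2 * (p : ℂ))⁻¹ * Complex.exp (↑(-2 * log p) * t * Complex.I) :=
  sum_congr rfl fun _ hp => one_div_two_mul_cpow_eq (prime_of_mem_primesInExpBlock hp).ne_zero t

lemma integral_exp_mul_norm_Qpoly_pow_le (l k : ℕ) {T : ℝ} (hT : 0 ≤ T) :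
    ∫ t in T..(2 * T), (exp (l / 10) * ‖Qpoly l (1 / 2 + Complex.I * t)‖) ^ (2 * k)
      ≤ exp (l / 10) ^ (2 * k) * (T * k ! * (∑ p ∈ primesInExpBlock l, (2 * (p : ℝ))⁻¹ ^ 2) ^ k
        + exp (l + 1) ^ k * (∑ p ∈ primesInExpBlock l, (2 * (p : ℝ))⁻¹) ^ (2 * k)) := by
  have hmoment := integral_norm_sum_prime_pow_le (primesInExpBlock l)
    (fun _ => prime_of_mem_primesInExpBlock) (fun p => (2 * (p : ℂ))⁻¹) k (exp_pos _)
    (fun _ => le_exp_of_mem_primesInExpBlock) (a := T) (b := 2 * T) (by linarith)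
  simp only [norm_inv, norm_mul, Complex.norm_ofNat, Complex.norm_natCast,
    show 2 * T - T = T by ring] at hmoment
  simp only [mul_pow, Qpoly_half_add_I_mul, intervalIntegral.integral_const_mul]
  gcongr

/-- Moment bound for `Q_l`: with `k = ⌈l e^{4l/5}⌉` and `e^{2(l+1)k} ≤ T/log T`,
`∫_T^{2T} (e^{l/10} |Q_l(1/2+it)|)^{2k} dt ≪ T e^{-l e^{l/2}}`. -/
theorem stmt12 : ∃ C > 0, ∀ (T : ℝ) (l k : ℕ), 1 ≤ l → 3 ≤ T →
    k = ⌈(l : ℝ) * Real.exp (4 * (l : ℝ) / 5)⌉₊ →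
    Real.exp (2 * ((l : ℝ) + 1) * k) ≤ T / Real.log T →
    (∫ t in T..(2 * T),
      (Real.exp ((l : ℝ) / 10) *
        ‖Qpoly l (1 / 2 + Complex.I * (t : ℂ))‖) ^ (2 * k))
    ≤ C * T * Real.exp (-(l : ℝ) * Real.exp ((l : ℝ) / 2)) := by
  refine ⟨(4 * exp 1 + 1) * exp (10 * exp 5), by positivity, fun T l k hl hT hk hTk => ?_⟩
  have hl1 : (1 : ℝ) ≤ l := by exact_mod_cast hl
  have hkpos : 0 < (l : ℝ) * exp (4 * l / 5) := by positivity
  have hk0 : k ≠ 0 := hk ▸ (Nat.ceil_pos.2 hkpos).ne'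
  have hkge : l * exp (4 * l / 5) ≤ (k : ℝ) := hk ▸ Nat.le_ceil _
  have hkle : (k : ℝ) ≤ l * exp (4 * l / 5) + 1 := hk ▸ (Nat.ceil_lt_add_one hkpos.le).le
  have hTexp : exp (2 * (l + 1) * k) ≤ T := hTk.trans (div_le_self (by linarith)
    ((le_log_iff_exp_le (by linarith)).2 (by linarith [exp_one_lt_d9])))
  calc _ ≤ T * (exp (l / 10) ^ (2 * k) * k ! *
          (∑ p ∈ primesInExpBlock l, (2 * (p : ℝ))⁻¹ ^ 2) ^ k)
        + exp (l / 10) ^ (2 * k) * exp (l + 1) ^ k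
          * (∑ p ∈ primesInExpBlock l, (2 * (p : ℝ))⁻¹) ^ (2 * k) := by
        linarith [integral_exp_mul_norm_Qpoly_pow_le l k (T := T) (by linarith)]
    _ ≤ T * (4 * exp 1 * exp (-(k / 4))) + T * exp (-(k / 4)) := by
        refine add_le_add (mul_le_mul_of_nonneg_left ?_ (by linarith)) ?_
        · exact exp_pow_mul_factorial_mul_pow_le hl1 hk0 hkle (by positivity)
            (sum_inv_two_mul_sq_mul_le (by positivity))
        · exact exp_pow_mul_exp_pow_mul_pow_le hl1 (sq_sum_inv_two_mul_le l) hTexp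
    _ ≤ (4 * exp 1 + 1) * T * (exp (10 * exp 5) * exp (-l * exp (l / 2))) := by
        have := mul_le_mul_of_nonneg_left (exp_neg_div_four_le (by positivity) hkge)
          (by positivity : 0 ≤ (4 * exp 1 + 1) * T)
        linarith
    _ = _ := by ring
end
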